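/- Let F : ℝ² → Matrix (n×n, ℝ) be a smooth linear process (F(t,t) = I, F(s,t)·F(τ,s) = F(τ,t)) with values in invertible matrices, and let O(τ, t) be the solution of ∂_t O(τ,t) = A⁻(t)·O(τ,t), O(τ,τ) = I, where A⁻(t) is the skew-symmetric part of ∂_t F(τ,t)·F(τ,t)⁻¹ (which is independent of τ). Then O is itself a linear process: O(τ, t) = O(s, t)·O(τ, s) for all τ, s, t, and O(τ,t) ∈ SO(n). -/

import Mathlib

/-! Because `A` is skew, `d/dt (Xᵀ Y) = Xᵀ (Aᵀ + A) Y = 0` for any two solutions of `X' = A X`.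
With `X = Y = O(τ, ·)` this gives orthogonality; with `X = O(s, ·)`, `Y = O(τ, ·)`, evaluating at
`t` and at `s` gives `O(s, t)ᵀ O(τ, t) = O(τ, s)`, i.e. the process property. The determinant is
continuous with values in `{±1}` and equals `1` at `t = τ`, so it is `1` everywhere. -/

open Matrix

section

variable {ι κ : Type*}

theorem transpose_smul_sub_transpose {R : Type*} [CommRing R] (c : R) (M : Matrix ι ι R) :
    (c • (M - Mᵀ))ᵀ = -(c • (M - Mᵀ)) := by
  rw [transpose_smul, transpose_sub, transpose_transpose, ← smul_neg, neg_sub]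

theorem hasDerivAt_transpose_mul_apply [Fintype ι] {X Y : ℝ → Matrix ι κ ℝ}
    {X' Y' : Matrix ι κ ℝ} {t : ℝ}
    (hX : ∀ i j, HasDerivAt (fun u => X u i j) (X' i j) t)
    (hY : ∀ i j, HasDerivAt (fun u => Y u i j) (Y' i j) t) (i j : κ) :
    HasDerivAt (fun u => ((X u)ᵀ * Y u) i j) ((X'ᵀ * Y t + (X t)ᵀ * Y') i j) t := by
  simp only [mul_apply, Matrix.add_apply, transpose_apply, ← Finset.sum_add_distrib]
  exact HasDerivAt.fun_sum fun k _ => (hX k i).mul (hY k j)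

theorem transpose_mul_eq_of_hasDerivAt_skew [Fintype ι] {A : ℝ → Matrix ι ι ℝ}
    {X Y : ℝ → Matrix ι κ ℝ} (hA : ∀ t, (A t)ᵀ = -A t)
    (hX : ∀ t i j, HasDerivAt (fun u => X u i j) ((A t * X t) i j) t)
    (hY : ∀ t i j, HasDerivAt (fun u => Y u i j) ((A t * Y t) i j) t) (a b : ℝ) :
    (X a)ᵀ * Y a = (X b)ᵀ * Y b := by
  have hderiv : ∀ t i j, HasDerivAt (fun u => ((X u)ᵀ * Y u) i j) 0 t := by
    intro t i j
    have hzero : (A t * X t)ᵀ * Y t + (X t)ᵀ * (A t * Y t) = 0 := by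
      rw [transpose_mul, hA t, Matrix.mul_neg, Matrix.neg_mul, Matrix.mul_assoc,
        neg_add_cancel]
    have h := hasDerivAt_transpose_mul_apply (hX t) (hY t) i j
    rwa [hzero] at h
  ext i j
  exact is_const_of_deriv_eq_zero (fun t => (hderiv t i j).differentiableAt)
    (fun t => (hderiv t i j).deriv) a b

theorem det_eq_one_of_continuous_of_transpose_mul_self [Fintype ι] [DecidableEq ι]
    {X : ℝ → Matrix ι ι ℝ} (hX : Continuous X) (horth : ∀ t, (X t)ᵀ * X t = 1) {a : ℝ}
    (ha : (X a).det = 1) (b : ℝ) :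
    (X b).det = 1 := by
  have hsq : ∀ t, (X t).det ^ 2 = 1 := fun t => by
    simpa [det_mul, det_transpose, sq] using congrArg det (horth t)
  exact isPreconnected_univ.eq_of_sq_eq (g := fun _ => 1) hX.matrix_det.continuousOn
    continuousOn_const (fun t _ => by simp [hsq t]) (fun _ => one_ne_zero) (Set.mem_univ a) ha
    (Set.mem_univ b)

end

theorem stmt18_general {n : ℕ} (F F' : ℝ → ℝ → Matrix (Fin n) (Fin n) ℝ)
    (Aminus : ℝ → Matrix (Fin n) (Fin n) ℝ)
    (O : ℝ → ℝ → Matrix (Fin n) (Fin n) ℝ)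
    (hA : ∀ τ t, Aminus t
      = (2:ℝ)⁻¹ • (F' τ t * (F τ t)⁻¹ - (F' τ t * (F τ t)⁻¹)ᵀ))
    (hO' : ∀ τ t i j, HasDerivAt (fun u => O τ u i j) ((Aminus t * O τ t) i j) t)
    (hOτ : ∀ τ, O τ τ = 1) :
    (∀ τ s t, O τ t = O s t * O τ s) ∧
    (∀ τ t, (O τ t)ᵀ * O τ t = 1 ∧ (O τ t).det = 1) := by
  have hskew : ∀ t, (Aminus t)ᵀ = -Aminus t := fun t => by
    rw [hA 0 t]; exact transpose_smul_sub_transpose _ _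
  have hconst : ∀ σ τ a b, (O σ a)ᵀ * O τ a = (O σ b)ᵀ * O τ b := fun σ τ =>
    transpose_mul_eq_of_hasDerivAt_skew hskew (hO' σ) (hO' τ)
  have horth : ∀ τ t, (O τ t)ᵀ * O τ t = 1 := fun τ t => by
    rw [hconst τ τ t τ, hOτ, transpose_one, Matrix.one_mul]
  refine ⟨fun τ s t => ?_, fun τ t => ⟨horth τ t, ?_⟩⟩
  · have hcross : (O s t)ᵀ * O τ t = O τ s := by
      rw [hconst s τ t s, hOτ, transpose_one, Matrix.one_mul]
    rw [← hcross, ← Matrix.mul_assoc, mul_eq_one_comm.mp (horth s t), Matrix.one_mul]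
  · have hcont : Continuous (O τ) :=
      continuous_matrix fun i j => continuous_iff_continuousAt.mpr fun u =>
        (hO' τ u i j).continuousAt
    exact det_eq_one_of_continuous_of_transpose_mul_self hcont (horth τ) (a := τ)
      (by simp [hOτ]) t

theorem stmt18 {n : ℕ} (F F' : ℝ → ℝ → Matrix (Fin n) (Fin n) ℝ)
    (Aminus : ℝ → Matrix (Fin n) (Fin n) ℝ)
    (O : ℝ → ℝ → Matrix (Fin n) (Fin n) ℝ)
    (hI : ∀ t, F t t = 1) (hproc : ∀ τ s t, F s t * F τ s = F τ t)
    (hFinv : ∀ τ t, IsUnit (F τ t))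
    (hF' : ∀ τ t i j, HasDerivAt (fun u => F τ u i j) (F' τ t i j) t)
    (hA : ∀ τ t, Aminus t
      = (2:ℝ)⁻¹ • (F' τ t * (F τ t)⁻¹ - (F' τ t * (F τ t)⁻¹)ᵀ))
    (hO' : ∀ τ t i j, HasDerivAt (fun u => O τ u i j) ((Aminus t * O τ t) i j) t)
    (hOτ : ∀ τ, O τ τ = 1) :
    (∀ τ s t, O τ t = O s t * O τ s) ∧
    (∀ τ t, (O τ t)ᵀ * O τ t = 1 ∧ (O τ t).det = 1) :=
  stmt18_general F F' Aminus O hA hO' hOτ
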